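/- (Recursive Extension Lemma, Lemma 4.8.) Let n ≥ 1 and 1 ≤ k ≤ n. Let K be a finite geometric simplicial complex in ℝ^N with dim K = n+1, and let L be a subcomplex of K with dim L ≤ n such that every simplex of K not belonging to L is a face of some (n+1)-simplex of K; for 0 ≤ j ≤ n write M[j] = |L| ∪ |K_j|, with the subspace topology from ℝ^N. Let X be a topological space and let 𝒰, 𝒱, 𝒲 be open covers of X such that 𝒱 is a barycentric-star refinement of 𝒰 and 𝒲 is a (k−1)-barycentric-star refinement of 𝒱. Suppose f : M[k−1] → X is a continuous map such that for every (n+1)-simplex σ of K there is W_σ ∈ 𝒲 with f(σ ∩ M[k−1]) ⊆ W_σ. Then there exists a continuous map g : M[k] → X extending f such that for every (n+1)-simplex σ of K there is U_σ ∈ 𝒰 with g(σ ∩ M[k]) ⊆ U_σ. -/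

import Mathlib

open Set Metric Topology Geometry

noncomputable section

/-- The unit `k`-sphere, as a subset of `ℝ^{k+1}`. -/
abbrev unitSphere (k : ℕ) : Set (EuclideanSpace ℝ (Fin (k + 1))) := sphere 0 1

/-- The closed unit `(k+1)`-ball, as a subset of `ℝ^{k+1}`. -/
abbrev unitBall (k : ℕ) : Set (EuclideanSpace ℝ (Fin (k + 1))) := closedBall 0 1

/-- `g : D^{k+1} → X` extends `f : S^k → X`. -/
def ExtendsTo {X : Type*} [TopologicalSpace X] {k : ℕ}
    (f : C(unitSphere k, X)) (g : C(unitBall k, X)) : Prop :=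
  ∀ (y : EuclideanSpace ℝ (Fin (k + 1))) (hy : y ∈ unitSphere k),
    g ⟨y, sphere_subset_closedBall hy⟩ = f ⟨y, hy⟩

/-- `𝒰` is an open cover of `X`. -/
def IsOpenCover {X : Type*} [TopologicalSpace X] (𝒰 : Set (Set X)) : Prop :=
  (∀ U ∈ 𝒰, IsOpen U) ∧ ⋃₀ 𝒰 = univ

/-- The star `St(x,𝒱)` of a point with respect to a cover. -/
def ptStar {X : Type*} (x : X) (𝒱 : Set (Set X)) : Set X :=
  ⋃₀ {V ∈ 𝒱 | x ∈ V}

/-- `𝒱` refines `𝒰`. -/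
def Refines {X : Type*} (𝒱 𝒰 : Set (Set X)) : Prop :=
  ∀ V ∈ 𝒱, ∃ U ∈ 𝒰, V ⊆ U

/-- `𝒱` is a barycentric-star refinement of `𝒰`. -/
def BStarRefines {X : Type*} (𝒱 𝒰 : Set (Set X)) : Prop :=
  ∀ x : X, ∃ U ∈ 𝒰, ptStar x 𝒱 ⊆ U

/-- `𝒱` is an `m`-barycentric-star refinement of `𝒰`. -/
def NBStarRefines {X : Type*} [TopologicalSpace X] (m : ℕ) (𝒱 𝒰 : Set (Set X)) : Prop :=
  Refines 𝒱 𝒰 ∧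
    ∀ k ≤ m, ∀ x : X, ∀ f : C(unitSphere k, X), range f ⊆ ptStar x 𝒱 →
      ∃ U ∈ 𝒰, ptStar x 𝒱 ⊆ U ∧ ∃ g : C(unitBall k, X), range g ⊆ U ∧ ExtendsTo f g

variable {N : ℕ}

/-- The underlying point set of the `j`-skeleton of a geometric simplicial complex. -/
def skelSpace (K : SimplicialComplex ℝ (EuclideanSpace ℝ (Fin N))) (j : ℕ) :
    Set (EuclideanSpace ℝ (Fin N)) :=
  {x | ∃ s ∈ K.faces, s.card ≤ j + 1 ∧ x ∈ convexHull ℝ (s : Set (EuclideanSpace ℝ (Fin N)))}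

/-- `M[j] = |L| ∪ |K_j|`. -/
def Mset (K L : SimplicialComplex ℝ (EuclideanSpace ℝ (Fin N))) (j : ℕ) :
    Set (EuclideanSpace ℝ (Fin N)) :=
  L.space ∪ skelSpace K j

lemma Mset_mono (K L : SimplicialComplex ℝ (EuclideanSpace ℝ (Fin N))) {j j' : ℕ}
    (h : j ≤ j') : Mset K L j ⊆ Mset K L j' := by
  rintro x (hx | ⟨s, hs, hcard, hxs⟩)
  · exact Or.inl hx
  · exact Or.inr ⟨s, hs, hcard.trans (by omega), hxs⟩


/-!
The points of `M[m+1]` outside `M[m]` lie in the `(m+1)`-simplices of `K` that are not in `L`.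
Each of them is a closed `(m+1)`-ball whose boundary sphere lies in `M[m]`, and two of them meet
only inside `M[m]`, so `g` can be built one simplex at a time and glued. A simplex `t` of this
kind lies in an `(n+1)`-simplex `σ`, so `f` maps its boundary into `W_σ ∈ 𝒲`, hence into the star
`St(f z, 𝒲)` of a vertex `z` of `t`; the `m`-barycentric-star property extends `f` over `t` inside
some `V_t ∈ 𝒱` containing that star. Finally, for a vertex `v` of `σ`, every point of
`g(σ ∩ M[m+1])` shares a member of `𝒱` with `f v`: one containing `W_σ`, or `V_t` for some
`t ⊆ σ`, which contains `W_σ ∋ f v`. So `g(σ ∩ M[m+1]) ⊆ St(f v, 𝒱)`, which lies in a member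
of `𝒰`.
-/

theorem AffineBasis.mem_convexHull_image_compl_iff {ι E : Type*} [Fintype ι] [AddCommGroup E]
    [Module ℝ E] (b : AffineBasis ι ℝ E) (i : ι) {x : E} :
    x ∈ convexHull ℝ (b '' {i}ᶜ) ↔ x ∈ convexHull ℝ (range b) ∧ b.coord i x = 0 := by
  classical
  constructor
  · intro hx
    refine ⟨convexHull_mono (image_subset_range _ _) hx, ?_⟩
    refine convexHull_min ?_ ((convex_singleton 0).affine_preimage (b.coord i)) hx
    rintro _ ⟨j, hj, rfl⟩
    exact b.coord_apply_ne (Ne.symm hj)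
  · rintro ⟨hx, hxi⟩
    rw [b.convexHull_eq_nonneg_coord] at hx
    rw [← b.linear_combination_coord_eq_self x, ← Finset.sum_erase (a := i) _ (by simp [hxi])]
    refine (convex_convexHull ℝ _).sum_mem (fun j _ => hx j) ?_ fun j hj => ?_
    · rw [Finset.sum_erase (f := fun j => b.coord j x) _ hxi, b.sum_coord_apply_eq_one]
    · exact subset_convexHull ℝ _ ⟨j, Finset.ne_of_mem_erase hj, rfl⟩

theorem AffineBasis.frontier_convexHull {ι E : Type*} [Fintype ι] [NormedAddCommGroup E]
    [NormedSpace ℝ E] (b : AffineBasis ι ℝ E) :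
    frontier (convexHull ℝ (range b)) = ⋃ i, convexHull ℝ (b '' {i}ᶜ) := by
  rw [((finite_range b).isCompact_convexHull (𝕜 := ℝ)).isClosed.frontier_eq,
    b.interior_convexHull]
  ext x
  simp only [mem_sdiff, mem_ofPred_eq, mem_iUnion, b.mem_convexHull_image_compl_iff,
    b.convexHull_eq_nonneg_coord, not_forall, not_lt]
  constructor
  · rintro ⟨hx, i, hi⟩
    exact ⟨i, hx, le_antisymm hi (hx i)⟩
  · rintro ⟨i, hx, hi⟩
    exact ⟨hx, i, hi.le⟩

section Simplex

variable {E : Type*} [AddCommGroup E] [Module ℝ E]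

def simplexBoundary (t : Finset E) : Set E :=
  ⋃ a ∈ t, convexHull ℝ ((t : Set E) \ {a})

theorem simplexBoundary_subset_convexHull (t : Finset E) :
    simplexBoundary t ⊆ convexHull ℝ (t : Set E) :=
  iUnion₂_subset fun _ _ => convexHull_mono sdiff_subset

theorem Geometry.SimplicialComplex.convexHull_inter_subset_simplexBoundary
    (K : SimplicialComplex ℝ E) {s t : Finset E} (hs : s ∈ K.faces) (ht : t ∈ K.faces)
    (hts : ¬t ⊆ s) : convexHull ℝ ↑t ∩ convexHull ℝ ↑s ⊆ simplexBoundary t := by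
  obtain ⟨a, hat, has⟩ := Finset.not_subset.1 hts
  refine (K.inter_subset_convexHull ht hs).trans ((convexHull_mono ?_).trans
    (subset_iUnion₂ (s := fun a _ => convexHull ℝ ((t : Set E) \ {a})) a hat))
  rintro x ⟨hxt, hxs⟩
  exact ⟨hxt, by rintro rfl; exact has hxs⟩

end Simplex

theorem exists_homeomorph_unitBall_convexHull {E : Type*} [NormedAddCommGroup E]
    [NormedSpace ℝ E] {m : ℕ} {t : Finset E}
    (ht : AffineIndependent ℝ ((↑) : t → E)) (hcard : t.card = m + 2) :
    ∃ ψ : unitBall m ≃ₜ convexHull ℝ (t : Set E),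
      ∀ y : unitBall m, (y : EuclideanSpace ℝ (Fin (m + 1))) ∈ unitSphere m ↔
        (ψ y : E) ∈ simplexBoundary t := by
  -- Model `t` on the hull of an affine basis `b` of `ℝ^{m+1}`: it has interior, so a gauge
  -- homeomorphism takes it to the ball and its frontier (the union of its facets) to the sphere;
  -- the affine map `A` with `A ∘ b = (↑)` then carries it onto `t`, facet by facet.
  obtain ⟨b⟩ : Nonempty (AffineBasis t ℝ (EuclideanSpace ℝ (Fin (m + 1)))) :=
    AffineBasis.exists_affineBasis_of_finiteDimensional (by simp [hcard])
  have hS : IsCompact (convexHull ℝ (range b)) :=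
    (finite_range b).isCompact_convexHull (𝕜 := ℝ)
  obtain ⟨h, -, hball, hsphere⟩ := exists_homeomorph_image_interior_closure_frontier_eq_unitBall
    (convex_convexHull ℝ _) ⟨_, b.centroid_mem_interior_convexHull⟩ hS.isBounded
  rw [hS.isClosed.closure_eq] at hball
  let A : EuclideanSpace ℝ (Fin (m + 1)) →ᵃ[ℝ] E :=
    (Finset.univ.affineCombination ℝ ((↑) : t → E)).comp b.coords
  have hAb : A ∘ b = (↑) := funext fun i =>
    Finset.univ.affineCombination_of_eq_one_of_eq_zero _ _ (Finset.mem_univ i)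
      (b.coord_apply_eq i) fun _ _ hj => b.coord_apply_ne hj
  have hA_inj : Function.Injective A := fun x y hxy => b.ext_elem fun i => congrFun
    ((affineIndependent_iff_eq_of_fintype_affineCombination_eq ℝ _).1 ht _ _
      (b.sum_coord_apply_eq_one x) (b.sum_coord_apply_eq_one y) hxy) i
  have hA_image (s : Set t) : A '' convexHull ℝ (b '' s) = convexHull ℝ ((↑) '' s) := by
    rw [AffineMap.image_convexHull, ← image_comp, hAb]
  have hA_cont : Continuous A := A.continuous_of_finiteDimensional
  let Φ : unitBall m → E := A ∘ h.symm ∘ (↑)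
  have hΦ : Topology.IsEmbedding Φ :=
    ((hA_cont.comp (h.symm.continuous.comp continuous_subtype_val)).isClosedEmbedding
      (hA_inj.comp (h.symm.injective.comp Subtype.val_injective))).isEmbedding
  have hrange : range Φ = convexHull ℝ (t : Set E) := by
    calc range Φ = A '' (h.symm '' closedBall 0 1) := by
          rw [← image_comp, ← Subtype.range_coe (s := closedBall _ _), ← range_comp]; rfl
      _ = convexHull ℝ (t : Set E) := by
          rw [← hball, h.image_symm, h.preimage_image, ← image_univ, hA_image, image_univ,
            Subtype.range_coe]
  refine ⟨hΦ.toHomeomorph.trans (Homeomorph.setCongr hrange), fun y => ?_⟩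
  have hfacet (i : t) : ((↑) '' {i}ᶜ : Set E) = (t : Set E) \ {(i : E)} := by
    ext x
    constructor
    · rintro ⟨j, hj, rfl⟩
      exact ⟨j.2, fun hji => hj (Subtype.ext hji)⟩
    · rintro ⟨hx, hxi⟩
      exact ⟨⟨x, hx⟩, fun hji => hxi (congrArg Subtype.val hji), rfl⟩
  change _ ↔ A (h.symm y) ∈ _
  rw [unitSphere, ← hsphere, h.image_eq_preimage_symm, mem_preimage, b.frontier_convexHull,
    simplexBoundary, ← hA_inj.mem_set_image, image_iUnion]
  simp only [mem_iUnion, hA_image, hfacet, Subtype.exists, exists_prop]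

section Covers

variable {X : Type*} {𝒱 𝒲 : Set (Set X)}

theorem subset_ptStar {V : Set X} (hV : V ∈ 𝒱) {x : X} (hx : x ∈ V) : V ⊆ ptStar x 𝒱 :=
  subset_sUnion_of_mem ⟨hV, hx⟩

theorem NBStarRefines.exists_extension_of_homeomorph [TopologicalSpace X] {m k : ℕ}
    (h : NBStarRefines m 𝒲 𝒱) (hk : k ≤ m) {E : Type*} [TopologicalSpace E] {S B : Set E}
    (ψ : unitBall k ≃ₜ S)
    (hψ : ∀ y : unitBall k, (y : EuclideanSpace ℝ (Fin (k + 1))) ∈ unitSphere k ↔ (ψ y : E) ∈ B)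
    (φ : C(B, X)) {x : X} (hφ : range φ ⊆ ptStar x 𝒲) :
    ∃ V ∈ 𝒱, ptStar x 𝒲 ⊆ V ∧ ∃ g : C(S, X), range g ⊆ V ∧
      ∀ (y : E) (hyS : y ∈ S) (hyB : y ∈ B), g ⟨y, hyS⟩ = φ ⟨y, hyB⟩ := by
  let F : C(unitSphere k, X) := φ.comp
    ⟨fun y => ⟨ψ ⟨y.1, sphere_subset_closedBall y.2⟩,
      (hψ ⟨y.1, sphere_subset_closedBall y.2⟩).1 y.2⟩, by fun_prop⟩
  obtain ⟨V, hV, hxV, G, hGV, hGF⟩ := h.2 k hk x F (by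
    rintro _ ⟨y, rfl⟩
    exact hφ (mem_range_self _))
  refine ⟨V, hV, hxV, G.comp ψ.symm, ?_, fun y hyS hyB => ?_⟩
  · rintro _ ⟨y, rfl⟩
    exact hGV (mem_range_self _)
  have hsph : ((ψ.symm ⟨y, hyS⟩ : unitBall k) : EuclideanSpace ℝ (Fin (k + 1))) ∈ unitSphere k :=
    (hψ _).2 (by simpa using hyB)
  simpa [F] using hGF _ hsph

end Covers

section Gluing

variable {Y X : Type*} [TopologicalSpace Y] [TopologicalSpace X]

theorem exists_continuousMap_of_finite_isClosed_cover {ι : Type*} [Finite ι] {S : ι → Set Y}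
    (hS : ∀ i, IsClosed (S i)) (hcov : ⋃ i, S i = univ) (φ : ∀ i, C(S i, X))
    (hφ : ∀ i j (y : Y) (hi : y ∈ S i) (hj : y ∈ S j), φ i ⟨y, hi⟩ = φ j ⟨y, hj⟩) :
    ∃ g : C(Y, X), ∀ i (y : Y) (hy : y ∈ S i), g y = φ i ⟨y, hy⟩ := by
  let g : Y → X := Set.liftCover S (fun i => φ i) hφ hcov
  have hg : ∀ i (y : Y) (hy : y ∈ S i), g y = φ i ⟨y, hy⟩ := fun _ _ hy => liftCover_of_mem hy
  refine ⟨⟨g, (locallyFinite_of_finite S).continuous hcov hS fun i => ?_⟩, hg⟩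
  rw [continuousOn_iff_continuous_domRestrict]
  convert (φ i).continuous using 1
  exact funext fun y => hg i y y.2

theorem exists_continuousMap_extend_of_cells {ι : Type*} [Finite ι] {A D : Set Y}
    {C : ι → Set Y} (hA : IsClosed A) (hC : ∀ i, IsClosed (C i)) (hD : D ⊆ A ∪ ⋃ i, C i)
    (hCC : ∀ i j, i ≠ j → C i ∩ C j ⊆ A) (f : C(A, X)) (g : ∀ i, C(C i, X))
    (hfg : ∀ i (y : Y) (hyC : y ∈ C i) (hyA : y ∈ A), g i ⟨y, hyC⟩ = f ⟨y, hyA⟩) :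
    ∃ G : C(D, X), (∀ (y : D) (hy : (y : Y) ∈ A), G y = f ⟨y, hy⟩) ∧
      ∀ i (y : D) (hy : (y : Y) ∈ C i), G y = g i ⟨y, hy⟩ := by
  let S : Option ι → Set D := fun o => (↑) ⁻¹' o.elim A C
  let φ : ∀ o, C(S o, X)
    | none => f.comp ⟨fun y => ⟨y.1.1, y.2⟩, by fun_prop⟩
    | some i => (g i).comp ⟨fun y => ⟨y.1.1, y.2⟩, by fun_prop⟩
  have hS : ∀ o, IsClosed (S o) := by
    rintro (_ | i)
    exacts [hA.preimage continuous_subtype_val, (hC i).preimage continuous_subtype_val]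
  have hcov : ⋃ o, S o = univ := by
    refine eq_univ_of_forall fun y => ?_
    rcases hD y.2 with hy | hy
    · exact mem_iUnion.2 ⟨none, hy⟩
    · obtain ⟨i, hi⟩ := mem_iUnion.1 hy
      exact mem_iUnion.2 ⟨some i, hi⟩
  obtain ⟨G, hG⟩ := exists_continuousMap_of_finite_isClosed_cover hS hcov φ <| by
    rintro (_ | i) (_ | j) y hi hj
    · rfl
    · exact (hfg j y hj hi).symm
    · exact hfg i y hi hj
    · obtain rfl | hij := eq_or_ne i j
      · rfl
      · exact (hfg i y hi (hCC i j hij ⟨hi, hj⟩)).trans (hfg j y hj _).symm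
  exact ⟨G, fun y hy => hG none y hy, fun i y hy => hG (some i) y hy⟩

end Gluing

-- The `(m+1)`-simplices (`m + 2` vertices) of `K` outside `L`, whose union with `M[m]` is `M[m+1]`.
def attachedSimplices (K L : SimplicialComplex ℝ (EuclideanSpace ℝ (Fin N))) (m : ℕ) :
    Set (Finset (EuclideanSpace ℝ (Fin N))) :=
  {t ∈ K.faces | t.card = m + 2 ∧ t ∉ L.faces}

section Skeleta

variable {K L : SimplicialComplex ℝ (EuclideanSpace ℝ (Fin N))}

theorem vertex_mem_Mset (j : ℕ) {s : Finset (EuclideanSpace ℝ (Fin N))} (hs : s ∈ K.faces)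
    {v : EuclideanSpace ℝ (Fin N)} (hv : v ∈ s) : v ∈ Mset K L j :=
  Or.inr ⟨{v}, K.down_closed hs (by simpa using hv) (by simp), by simp,
    subset_convexHull ℝ _ (by simp)⟩

theorem isClosed_Mset (hKfin : K.faces.Finite) (hLK : L.faces ⊆ K.faces) (j : ℕ) :
    IsClosed (Mset K L j) := by
  have hskel : skelSpace K j = ⋃ s ∈ {s ∈ K.faces | s.card ≤ j + 1}, convexHull ℝ ↑s := by
    ext
    simp [skelSpace, and_assoc]
  refine IsClosed.union ?_ ?_
  · exact (hKfin.subset hLK).isClosed_biUnion fun s _ =>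
      s.finite_toSet.isClosed_convexHull (𝕜 := ℝ)
  · rw [hskel]
    exact (hKfin.subset (sep_subset _ _)).isClosed_biUnion fun s _ =>
      s.finite_toSet.isClosed_convexHull (𝕜 := ℝ)

theorem Mset_subset_space (hLK : L.faces ⊆ K.faces) (j : ℕ) : Mset K L j ⊆ K.space :=
  union_subset (biUnion_subset_biUnion_left hLK) fun _ ⟨s, hs, _, hx⟩ =>
    K.mem_space_iff.2 ⟨s, hs, hx⟩

theorem simplexBoundary_subset_Mset {m : ℕ} {t : Finset (EuclideanSpace ℝ (Fin N))}
    (ht : t ∈ K.faces) (hcard : t.card ≤ m + 2) : simplexBoundary t ⊆ Mset K L m := by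
  refine iUnion₂_subset fun a ha x hx =>
    Or.inr ⟨t.erase a, K.down_closed ht (t.erase_subset a) ?_, ?_, by rwa [Finset.coe_erase]⟩
  · rw [← Finset.coe_nonempty, Finset.coe_erase]
    exact convexHull_nonempty_iff.1 ⟨x, hx⟩
  · rw [Finset.card_erase_of_mem ha]
    omega

theorem convexHull_inter_Mset_subset_simplexBoundary (hLK : L.faces ⊆ K.faces) {m : ℕ}
    {t : Finset (EuclideanSpace ℝ (Fin N))} (ht : t ∈ attachedSimplices K L m) :
    convexHull ℝ ↑t ∩ Mset K L m ⊆ simplexBoundary t := by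
  obtain ⟨htK, hcard, htL⟩ := ht
  rintro x ⟨hxt, hxL | ⟨s, hs, hscard, hxs⟩⟩
  · obtain ⟨s, hsL, hxs⟩ := L.mem_space_iff.1 hxL
    refine K.convexHull_inter_subset_simplexBoundary (hLK hsL) htK (fun hts => ?_) ⟨hxt, hxs⟩
    exact htL (L.down_closed hsL hts (K.nonempty_of_mem_faces htK))
  · refine K.convexHull_inter_subset_simplexBoundary hs htK (fun hts => ?_) ⟨hxt, hxs⟩
    have := Finset.card_le_card hts
    omega

theorem convexHull_inter_convexHull_subset_Mset {m : ℕ}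
    {t t' : Finset (EuclideanSpace ℝ (Fin N))}
    (ht : t ∈ attachedSimplices K L m) (ht' : t' ∈ attachedSimplices K L m) (hne : t ≠ t') :
    convexHull ℝ ↑t ∩ convexHull ℝ ↑t' ⊆ Mset K L m :=
  (K.convexHull_inter_subset_simplexBoundary ht'.1 ht.1 fun h =>
    hne (Finset.eq_of_subset_of_card_le h (by rw [ht.2.1, ht'.2.1]))).trans
    (simplexBoundary_subset_Mset ht.1 ht.2.1.le)

theorem mem_Mset_or_exists_attachedSimplices {m : ℕ}
    {σ : Finset (EuclideanSpace ℝ (Fin N))} (hσ : σ ∈ K.faces) {y : EuclideanSpace ℝ (Fin N)}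
    (hy : y ∈ Mset K L (m + 1)) (hyσ : y ∈ convexHull ℝ ↑σ) :
    y ∈ Mset K L m ∨ ∃ t ∈ attachedSimplices K L m, t ⊆ σ ∧ y ∈ convexHull ℝ ↑t := by
  rcases hy with hyL | ⟨s, hs, hscard, hys⟩
  · exact Or.inl (Or.inl hyL)
  by_cases hsm : s.card ≤ m + 1
  · exact Or.inl (Or.inr ⟨s, hs, hsm, hys⟩)
  by_cases hsL : s ∈ L.faces
  · exact Or.inl (Or.inl (L.mem_space_iff.2 ⟨s, hsL, hys⟩))
  by_cases hsσ : s ⊆ σ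
  · exact Or.inr ⟨s, ⟨hs, by omega, hsL⟩, hsσ, hys⟩
  · exact Or.inl (simplexBoundary_subset_Mset hs hscard
      (K.convexHull_inter_subset_simplexBoundary hσ hs hsσ ⟨hys, hyσ⟩))

theorem Mset_succ_subset (hLK : L.faces ⊆ K.faces) (m : ℕ) :
    Mset K L (m + 1) ⊆ Mset K L m ∪
      ⋃ t : attachedSimplices K L m, convexHull ℝ (t : Set (EuclideanSpace ℝ (Fin N))) := by
  intro y hy
  obtain ⟨σ, hσ, hyσ⟩ := K.mem_space_iff.1 (Mset_subset_space hLK _ hy)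
  rcases mem_Mset_or_exists_attachedSimplices hσ hy hyσ with hyM | ⟨t, ht, -, hyt⟩
  · exact Or.inl hyM
  · exact Or.inr (mem_iUnion.2 ⟨⟨t, ht⟩, hyt⟩)

theorem exists_extension_over_attachedSimplex {X : Type*} [TopologicalSpace X]
    {𝒱 𝒲 : Set (Set X)} (hLK : L.faces ⊆ K.faces) {m : ℕ} (hWV : NBStarRefines m 𝒲 𝒱)
    (f : C(Mset K L m, X)) {t : Finset (EuclideanSpace ℝ (Fin N))}
    (ht : t ∈ attachedSimplices K L m)
    (hfW : ∃ W ∈ 𝒲, MapsTo f (Subtype.val ⁻¹' convexHull ℝ ↑t) W) :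
    ∃ V ∈ 𝒱, (∀ W ∈ 𝒲, MapsTo f (Subtype.val ⁻¹' convexHull ℝ ↑t) W → W ⊆ V) ∧
      ∃ g : C(convexHull ℝ (t : Set (EuclideanSpace ℝ (Fin N))), X), range g ⊆ V ∧
        ∀ (y : EuclideanSpace ℝ (Fin N)) (hyt : y ∈ convexHull ℝ ↑t) (hyM : y ∈ Mset K L m),
          g ⟨y, hyt⟩ = f ⟨y, hyM⟩ := by
  obtain ⟨W, hW, hfW⟩ := hfW
  obtain ⟨ψ, hψ⟩ := exists_homeomorph_unitBall_convexHull (K.indep ht.1) ht.2.1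
  obtain ⟨v, hv⟩ := K.nonempty_of_mem_faces ht.1
  let z : Mset K L m := ⟨v, vertex_mem_Mset m ht.1 hv⟩
  have hz : (z : EuclideanSpace ℝ (Fin N)) ∈ convexHull ℝ ↑t := subset_convexHull ℝ _ hv
  let φ : C(simplexBoundary t, X) :=
    f.comp (ContinuousMap.inclusion (simplexBoundary_subset_Mset ht.1 ht.2.1.le))
  have hφ : range φ ⊆ ptStar (f z) 𝒲 := by
    rintro _ ⟨y, rfl⟩
    exact subset_ptStar hW (hfW hz) (hfW (simplexBoundary_subset_convexHull t y.2))
  obtain ⟨V, hV, hzV, g, hgV, hgφ⟩ := hWV.exists_extension_of_homeomorph le_rfl ψ hψ φ hφ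
  refine ⟨V, hV, fun W' hW' hfW' => (subset_ptStar hW' (hfW' hz)).trans hzV, g, hgV,
    fun y hyt hyM => ?_⟩
  exact hgφ y hyt (convexHull_inter_Mset_subset_simplexBoundary hLK ht ⟨hyt, hyM⟩)

theorem exists_extension_Mset_succ {X : Type*} [TopologicalSpace X] {𝒱 𝒲 : Set (Set X)}
    (hKfin : K.faces.Finite) (hLK : L.faces ⊆ K.faces) {m : ℕ} (hWV : NBStarRefines m 𝒲 𝒱)
    (f : C(Mset K L m, X))
    (hfW : ∀ t ∈ attachedSimplices K L m, ∃ W ∈ 𝒲, MapsTo f (Subtype.val ⁻¹' convexHull ℝ ↑t) W) :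
    ∃ G : C(Mset K L (m + 1), X),
      (∀ (y : Mset K L (m + 1)) (hy : (y : EuclideanSpace ℝ (Fin N)) ∈ Mset K L m),
        G y = f ⟨y, hy⟩) ∧
      ∀ t ∈ attachedSimplices K L m, ∃ V ∈ 𝒱,
        (∀ W ∈ 𝒲, MapsTo f (Subtype.val ⁻¹' convexHull ℝ ↑t) W → W ⊆ V) ∧
        MapsTo G (Subtype.val ⁻¹' convexHull ℝ ↑t) V := by
  have : Finite (attachedSimplices K L m) := (hKfin.subset fun t ht => ht.1).to_subtype
  choose V hV hWV_sub g hgV hgf using fun t : attachedSimplices K L m =>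
    exists_extension_over_attachedSimplex hLK hWV f t.2 (hfW t t.2)
  have hC (t : attachedSimplices K L m) :
      IsClosed (convexHull ℝ (t : Set (EuclideanSpace ℝ (Fin N)))) :=
    t.1.finite_toSet.isClosed_convexHull (𝕜 := ℝ)
  have hCC (t t' : attachedSimplices K L m) (hne : t ≠ t') :=
    convexHull_inter_convexHull_subset_Mset t.2 t'.2 (Subtype.coe_ne_coe.2 hne)
  obtain ⟨G, hGf, hGg⟩ := exists_continuousMap_extend_of_cells (isClosed_Mset hKfin hLK m)
    hC (Mset_succ_subset hLK m) hCC f g hgf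
  refine ⟨G, hGf, fun t ht => ⟨V ⟨t, ht⟩, hV _, hWV_sub ⟨t, ht⟩, fun y hyt => ?_⟩⟩
  rw [hGg ⟨t, ht⟩ y hyt]
  exact hgV _ (mem_range_self _)

end Skeleta

theorem recursive_extension_general
    (n k : ℕ) (hk1 : 1 ≤ k)
    (K L : SimplicialComplex ℝ (EuclideanSpace ℝ (Fin N)))
    (hKfin : K.faces.Finite)
    (hLK : L.faces ⊆ K.faces)
    (hfull : ∀ s ∈ K.faces, s ∉ L.faces → ∃ t ∈ K.faces, t.card = n + 2 ∧ s ⊆ t)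
    {X : Type*} [TopologicalSpace X]
    (𝒰 𝒱 𝒲 : Set (Set X))
    (hVU : BStarRefines 𝒱 𝒰) (hWV : NBStarRefines (k - 1) 𝒲 𝒱)
    (f : C(Mset K L (k - 1), X))
    (hf : ∀ s ∈ K.faces, s.card = n + 2 → ∃ W ∈ 𝒲,
      ∀ y : Mset K L (k - 1),
        (y : EuclideanSpace ℝ (Fin N)) ∈ convexHull ℝ (s : Set (EuclideanSpace ℝ (Fin N))) →
          f y ∈ W) :
    ∃ g : C(Mset K L k, X),
      (∀ y : Mset K L (k - 1), g (Set.inclusion (Mset_mono K L (Nat.sub_le k 1)) y) = f y) ∧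
      ∀ s ∈ K.faces, s.card = n + 2 → ∃ U ∈ 𝒰,
        ∀ y : Mset K L k,
          (y : EuclideanSpace ℝ (Fin N)) ∈ convexHull ℝ (s : Set (EuclideanSpace ℝ (Fin N))) →
            g y ∈ U := by
  -- `m + 1 - 1` reduces to `m`, so `f` and `hWV` can be used at level `m` as they stand.
  obtain ⟨m, rfl⟩ : ∃ m, k = m + 1 := ⟨k - 1, by omega⟩
  obtain ⟨G, hGf, hGV⟩ := exists_extension_Mset_succ hKfin hLK hWV f fun t ht => by
    obtain ⟨σ, hσ, hσcard, htσ⟩ := hfull t ht.1 ht.2.2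
    obtain ⟨W, hW, hfW⟩ := hf σ hσ hσcard
    exact ⟨W, hW, MapsTo.mono_left hfW (preimage_mono (convexHull_mono htσ))⟩
  refine ⟨G, fun y => hGf (Set.inclusion _ y) y.2, fun σ hσ hσcard => ?_⟩
  obtain ⟨W, hW, hfW⟩ := hf σ hσ hσcard
  obtain ⟨v, hv⟩ := K.nonempty_of_mem_faces hσ
  let z : Mset K L m := ⟨v, vertex_mem_Mset m hσ hv⟩
  have hzW : f z ∈ W := hfW z (subset_convexHull ℝ _ hv)
  obtain ⟨U, hU, hUV⟩ := hVU (f z)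
  refine ⟨U, hU, fun y hyσ => hUV ?_⟩
  rcases mem_Mset_or_exists_attachedSimplices hσ y.2 hyσ with hyM | ⟨t, ht, htσ, hyt⟩
  · obtain ⟨V, hV, hWV⟩ := hWV.1 W hW
    rw [hGf y hyM]
    exact subset_ptStar hV (hWV hzW) (hWV (hfW _ hyσ))
  · obtain ⟨V, hV, hWV, hGV⟩ := hGV t ht
    have hfW_t : MapsTo f (Subtype.val ⁻¹' convexHull ℝ ↑t) W :=
      MapsTo.mono_left hfW (preimage_mono (convexHull_mono htσ))
    exact subset_ptStar hV (hWV W hW hfW_t hzW) (hGV hyt)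

/-- Lemma 4.8 (Recursive Extensions). -/
theorem recursive_extension
    (n k : ℕ) (hn : 1 ≤ n) (hk1 : 1 ≤ k) (hkn : k ≤ n)
    (K L : SimplicialComplex ℝ (EuclideanSpace ℝ (Fin N)))
    (hKfin : K.faces.Finite)
    (hKdim : ∀ s ∈ K.faces, s.card ≤ n + 2)
    (hKtop : ∃ s ∈ K.faces, s.card = n + 2)
    (hLK : L.faces ⊆ K.faces)
    (hLdim : ∀ s ∈ L.faces, s.card ≤ n + 1)
    (hfull : ∀ s ∈ K.faces, s ∉ L.faces → ∃ t ∈ K.faces, t.card = n + 2 ∧ s ⊆ t)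
    {X : Type*} [TopologicalSpace X]
    (𝒰 𝒱 𝒲 : Set (Set X))
    (h𝒰 : IsOpenCover 𝒰) (h𝒱 : IsOpenCover 𝒱) (h𝒲 : IsOpenCover 𝒲)
    (hVU : BStarRefines 𝒱 𝒰) (hWV : NBStarRefines (k - 1) 𝒲 𝒱)
    (f : C(Mset K L (k - 1), X))
    (hf : ∀ s ∈ K.faces, s.card = n + 2 → ∃ W ∈ 𝒲,
      ∀ y : Mset K L (k - 1),
        (y : EuclideanSpace ℝ (Fin N)) ∈ convexHull ℝ (s : Set (EuclideanSpace ℝ (Fin N))) →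
          f y ∈ W) :
    ∃ g : C(Mset K L k, X),
      (∀ y : Mset K L (k - 1), g (Set.inclusion (Mset_mono K L (Nat.sub_le k 1)) y) = f y) ∧
      ∀ s ∈ K.faces, s.card = n + 2 → ∃ U ∈ 𝒰,
        ∀ y : Mset K L k,
          (y : EuclideanSpace ℝ (Fin N)) ∈ convexHull ℝ (s : Set (EuclideanSpace ℝ (Fin N))) →
            g y ∈ U :=
  recursive_extension_general n k hk1 K L hKfin hLK hfull 𝒰 𝒱 𝒲 hVU hWV f hf
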